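/- arXiv:2202.00851 — 2 statements merged into one kernel-verified Lean document; each statement's English description precedes it below -/
import Mathlib

section
/- For every ordinal a, φ_{a+1}(0) = sup over natural numbers n of the n-fold iterate of φ_a applied to φ_a(0) + 1; that is, φ_{a+1}(0) = ⨆_{n ∈ ℕ} φ_a^[n](φ_a(0) + 1). -/
noncomputable def veblen (o : Ordinal.{0}) : Ordinal.{0} → Ordinal.{0} :=
  if o = 0 then fun b => Ordinal.omega0 ^ b
  else Ordinal.derivFamily fun x : Set.Iio o => veblen x.1
termination_by o
decreasing_by exact x.2

/-! The recursion defining `veblen` is that of Mathlib's `Ordinal.veblen`, for which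
`φ_{a+1} = deriv φ_a`; hence `φ_{a+1}(0)` is the least fixed point `⨆ n, φ_a^[n] 0` of `φ_a`.
Starting the iteration at `φ_a 0 + 1` instead of `0` reaches the same fixed point, since
`0 ≤ φ_a 0 + 1` and, as `0 < φ_a 0 < φ_a (φ_a 0)`, that fixed point already lies above `φ_a 0 + 1`. -/

theorem veblen_eq_ordinal_veblen (o : Ordinal.{0}) : veblen o = Ordinal.veblen o := by
  induction o using WellFoundedLT.induction with
  | ind o ih =>
    rw [veblen]
    split_ifs with ho
    · rw [ho, Ordinal.veblen_zero]
    · rw [Ordinal.veblen_of_ne_zero ho]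
      congr 1
      funext x
      exact ih x.1 x.2

namespace Ordinal

theorem nfp_eq_of_le_of_le_nfp {f : Ordinal → Ordinal} (hf : Order.IsNormal f)
    {a b : Ordinal} (hab : a ≤ b) (hb : b ≤ nfp f a) : nfp f b = nfp f a :=
  le_antisymm (nfp_le_fp hf.monotone hb (nfp_fp hf a).le) (nfp_monotone hf.monotone hab)

end Ordinal

theorem veblen_succ_apply_zero (a : Ordinal) :
    veblen (a + 1) 0 = ⨆ n : ℕ, (veblen a)^[n] (veblen a 0 + 1) := by
  have hN := Ordinal.isNormal_veblen a
  simp only [veblen_eq_ordinal_veblen]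
  rw [Ordinal.veblen_add_one, Ordinal.deriv_zero_right, Ordinal.iSup_iterate_eq_nfp]
  refine (Ordinal.nfp_eq_of_le_of_le_nfp hN zero_le (Order.add_one_le_of_lt ?_)).symm
  exact Ordinal.iterate_lt_nfp hN.strictMono Ordinal.veblen_pos 1
end

section
/- Define the sequence of ordinals γ : ℕ → Ordinal by γ(0) = 0 and γ(n+1) = φ_{γ(n)}(0). Then for every natural number n ≥ 2, γ(n) is a limit ordinal and sup over a < γ(n) of φ_a(0) equals γ(n+1). -/
/-- γ 0 = 0 and γ (n+1) = φ_{γ n}(0). -/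
noncomputable def gammaSeq : ℕ → Ordinal.{0}
  | 0 => 0
  | n + 1 => veblen (gammaSeq n) 0

/-!
`veblen` is given by the same recursion as Mathlib's `Ordinal.veblen`, so Mathlib's theory
applies. For `o ≠ 0`, `φ_o(a)` is a fixed point of `ω ^ ·`, hence equals `ω ^ φ_o(a)` with a
nonzero exponent, which is a limit ordinal. And `a ↦ φ_a(0)` is a normal function, so at a limit
ordinal it is the supremum of its earlier values.
-/

theorem veblen_eq_ordinalVeblen : veblen = Ordinal.veblen := by
  funext o
  induction o using WellFoundedLT.induction with
  | ind o ih =>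
    rw [veblen, Ordinal.veblen, Ordinal.veblenWith]
    split_ifs
    · rfl
    · congr! 2 with x
      exact ih x.1 x.2

theorem Ordinal.isSuccLimit_veblen {o : Ordinal} (ho : o ≠ 0) (a : Ordinal) :
    Order.IsSuccLimit (Ordinal.veblen o a) := by
  rw [← veblen_veblen_of_lt (pos_iff_ne_zero.2 ho), veblen_zero_apply]
  exact isSuccLimit_opow_left isSuccLimit_omega0 veblen_pos.ne'

theorem gammaSeq_succ (n : ℕ) : gammaSeq (n + 1) = Ordinal.veblen (gammaSeq n) 0 := by
  rw [gammaSeq, veblen_eq_ordinalVeblen]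

theorem gammaSeq_isLimit_and_sup (n : ℕ) (hn : 2 ≤ n) :
    Order.IsSuccLimit (gammaSeq n) ∧
      (⨆ a : Set.Iio (gammaSeq n), veblen a.1 0) = gammaSeq (n + 1) := by
  obtain ⟨m, rfl⟩ : ∃ m, n = m + 1 + 1 := ⟨n - 2, by omega⟩
  have hlim : Order.IsSuccLimit (gammaSeq (m + 1 + 1)) := by
    rw [gammaSeq_succ, gammaSeq_succ]
    exact Ordinal.isSuccLimit_veblen Ordinal.veblen_pos.ne' 0
  refine ⟨hlim, ?_⟩
  rw [gammaSeq_succ (m + 1 + 1), veblen_eq_ordinalVeblen]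
  exact (Ordinal.isNormal_veblen_zero.apply_of_isSuccLimit hlim).symm
end
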